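/- arXiv:math/0602356 — 3 statements merged into one kernel-verified Lean document; each statement's English description precedes it below -/
import Mathlib

section
/- Let a, b > −1 and w < x < y be real numbers. Then ∫ₓ^y (y−u)^b (u−w)^c (u−x)^a du = [Γ(a+1)Γ(b+1)/Γ(a+b+2)] · (y−x)^{1+a+b} (x−w)^c · F(−c, a+1, a+b+2, (y−x)/(w−x)), where F is the Gauss hypergeometric function (defined by Euler's integral for argument less than 1). -/
open MeasureTheory Real Set Filter
open Topology

lemma poch_succ (c : ℝ) (k : ℕ) :
    (ascPochhammer ℝ (k+1)).eval c = (ascPochhammer ℝ k).eval c * (c + k) :=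
  ascPochhammer_succ_eval k c

lemma summable_poch_aux (c r : ℝ) (hr0 : 0 ≤ r) (hr1 : r < 1) :
    Summable (fun k : ℕ =>
      (k+1 : ℝ) * (|(ascPochhammer ℝ k).eval c| / (Nat.factorial k) * r ^ k)) := by
  set ρ : ℝ := (1 + r) / 2 with hρ
  have hρ1 : ρ < 1 := by rw [hρ]; linarith
  apply summable_of_ratio_norm_eventually_le hρ1
  have htend : Tendsto (fun k : ℕ => ((k:ℝ)+2) * ((k:ℝ)+|c|) * r / (((k:ℝ)+1) * ((k:ℝ)+1)))
      atTop (𝓝 r) := by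
    have h1 : Tendsto (fun k : ℕ => (1 + 1/((k:ℝ)+1)) * (1 + (|c|-1)/((k:ℝ)+1)) * r)
        atTop (𝓝 ((1 + 0) * (1 + 0) * r)) := by
      have h0 : Tendsto (fun k : ℕ => 1/((k:ℝ)+1)) atTop (𝓝 0) :=
        tendsto_one_div_add_atTop_nhds_zero_nat
      have h0' : Tendsto (fun k : ℕ => (|c|-1)/((k:ℝ)+1)) atTop (𝓝 0) := by
        have := h0.const_mul (|c|-1)
        simpa [div_eq_mul_inv] using this
      exact (((tendsto_const_nhds.add h0).mul (tendsto_const_nhds.add h0')).mul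
        tendsto_const_nhds)
    simp only [add_zero, one_mul] at h1
    have heq : (fun k : ℕ => (1 + 1/((k:ℝ)+1)) * (1 + (|c|-1)/((k:ℝ)+1)) * r)
        = (fun k : ℕ => ((k:ℝ)+2) * ((k:ℝ)+|c|) * r / (((k:ℝ)+1) * ((k:ℝ)+1))) := by
      funext k
      have hk : ((k:ℝ)+1) ≠ 0 := by positivity
      have e1 : (1 + 1/((k:ℝ)+1)) = ((k:ℝ)+2)/((k:ℝ)+1) := by
        field_simp; ring
      have e2 : (1 + (|c|-1)/((k:ℝ)+1)) = ((k:ℝ)+|c|)/((k:ℝ)+1) := by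
        field_simp; ring
      rw [e1, e2, div_mul_div_comm, div_mul_eq_mul_div]
    rwa [heq] at h1
  have hev : ∀ᶠ k : ℕ in atTop,
      ((k:ℝ)+2) * ((k:ℝ)+|c|) * r / (((k:ℝ)+1) * ((k:ℝ)+1)) ≤ ρ := by
    exact htend.eventually (eventually_le_nhds (by rw [hρ]; linarith))
  filter_upwards [hev] with k hk
  have hk1 : (0:ℝ) < (k:ℝ) + 1 := by positivity
  have key : ((k:ℝ)+2) * ((k:ℝ)+|c|) * r ≤ ρ * (((k:ℝ)+1) * ((k:ℝ)+1)) := by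
    rw [div_le_iff₀ (by positivity)] at hk; linarith
  have hPsucc : |(ascPochhammer ℝ (k+1)).eval c| = |(ascPochhammer ℝ k).eval c| * |c + k| := by
    rw [poch_succ, abs_mul]
  have hfact : ((Nat.factorial (k+1)) : ℝ) = (Nat.factorial k) * ((k:ℝ)+1) := by
    rw [Nat.factorial_succ]; push_cast; ring
  set A : ℝ := |(ascPochhammer ℝ k).eval c| / (Nat.factorial k) * r ^ k with hA
  have hA0 : 0 ≤ A := by positivity
  have hcabs : |c + k| ≤ (k:ℝ) + |c| := by
    calc |c + k| ≤ |c| + |(k:ℝ)| := abs_add_le _ _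
    _ = (k:ℝ) + |c| := by rw [Nat.abs_cast]; ring
  have lhs_eq : ‖((k:ℝ)+1+1) * (|(ascPochhammer ℝ (k+1)).eval c| / (Nat.factorial (k+1)) * r ^ (k+1))‖
      = ((k:ℝ)+2) * (A * (|c + k| * r / ((k:ℝ)+1))) := by
    rw [Real.norm_eq_abs, abs_of_nonneg (by positivity), hPsucc, hfact, hA]
    rw [pow_succ]
    have hfk : ((Nat.factorial k):ℝ) ≠ 0 := by positivity
    field_simp
    ring
  have rhs_eq : ρ * ‖((k:ℝ)+1) * (|(ascPochhammer ℝ k).eval c| / (Nat.factorial k) * r ^ k)‖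
      = ρ * (((k:ℝ)+1) * A) := by
    rw [Real.norm_eq_abs, abs_of_nonneg (by positivity), hA]
  push_cast
  rw [lhs_eq, rhs_eq]
  have h2 : ((k:ℝ)+2) * (|c + k| * r) ≤ ρ * (((k:ℝ)+1) * ((k:ℝ)+1)) := by
    have h3 : ((k:ℝ)+2) * (|c+k| * r) ≤ ((k:ℝ)+2) * (((k:ℝ)+|c|) * r) := by
      apply mul_le_mul_of_nonneg_left _ (by positivity)
      exact mul_le_mul_of_nonneg_right hcabs hr0
    calc ((k:ℝ)+2) * (|c+k| * r) ≤ ((k:ℝ)+2) * (((k:ℝ)+|c|) * r) := h3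
      _ = ((k:ℝ)+2) * ((k:ℝ)+|c|) * r := by ring
      _ ≤ ρ * (((k:ℝ)+1) * ((k:ℝ)+1)) := key
  calc ((k:ℝ)+2) * (A * (|c + k| * r / ((k:ℝ)+1)))
      = (((k:ℝ)+2) * (|c+k| * r)) / ((k:ℝ)+1) * A := by ring
    _ ≤ (ρ * (((k:ℝ)+1) * ((k:ℝ)+1))) / ((k:ℝ)+1) * A := by gcongr
    _ = ρ * (((k:ℝ)+1) * A) := by field_simp

lemma summable_poch_abs (c r : ℝ) (hr0 : 0 ≤ r) (hr1 : r < 1) :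
    Summable (fun k : ℕ => |(ascPochhammer ℝ k).eval c| / (Nat.factorial k) * r ^ k) :=
  (summable_poch_aux c r hr0 hr1).of_nonneg_of_le (fun k => by positivity)
    (fun k => le_mul_of_one_le_left (by positivity) (by exact_mod_cast Nat.succ_le_succ k.zero_le))

lemma hasSum_binomial (c t : ℝ) (ht : |t| < 1) :
    HasSum (fun k : ℕ => (ascPochhammer ℝ k).eval (-c) / (Nat.factorial k) * t ^ k)
      ((1 - t) ^ c) := by
  set a : ℕ → ℝ := fun k => (ascPochhammer ℝ k).eval (-c) / (Nat.factorial k) with ha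
  set r : ℝ := (1 + |t|) / 2 with hr
  have htr : |t| < r := by rw [hr]; have := abs_nonneg t; linarith
  have hr0 : (0:ℝ) < r := by rw [hr]; have := abs_nonneg t; linarith
  have hr1 : r < 1 := by rw [hr]; linarith
  have habs : ∀ k, |a k| = |(ascPochhammer ℝ k).eval (-c)| / (Nat.factorial k) := by
    intro k; rw [ha]; simp [abs_div, abs_of_nonneg (show (0:ℝ) ≤ (Nat.factorial k : ℝ) by positivity)]
  -- summability of values on the ball
  have hsumval : ∀ y : ℝ, |y| ≤ r → Summable (fun k => a k * y ^ k) := by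
    intro y hy
    apply Summable.of_norm_bounded (summable_poch_abs (-c) r hr0.le hr1)
    intro k
    rw [norm_mul, norm_pow, Real.norm_eq_abs, Real.norm_eq_abs, habs k]
    apply mul_le_mul_of_nonneg_left _ (by positivity)
    exact pow_le_pow_left₀ (abs_nonneg y) hy k
  -- the derivative bound
  set u : ℕ → ℝ := fun k => (k:ℝ) * (|(ascPochhammer ℝ k).eval (-c)| / (Nat.factorial k) * r ^ k) / r
    with hu
  have husum : Summable u := by
    apply Summable.div_const
    apply (summable_poch_aux (-c) r hr0.le hr1).of_nonneg_of_le (fun k => by positivity)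
    intro k
    apply mul_le_mul_of_nonneg_right _ (by positivity)
    exact_mod_cast Nat.le_succ k
  have hbound : ∀ (k : ℕ) (y : ℝ), |y| ≤ r →
      ‖a k * ((k:ℝ) * y ^ (k-1))‖ ≤ u k := by
    intro k y hy
    rw [norm_mul, norm_mul, Real.norm_eq_abs, Real.norm_eq_abs, Real.norm_eq_abs, habs k,
      Nat.abs_cast, abs_pow, hu]
    rcases Nat.eq_zero_or_pos k with hk | hk
    · simp [hk]
    · have hpow : |y| ^ (k-1) ≤ r ^ k / r := by
        have h1 : |y| ^ (k-1) ≤ r ^ (k-1) := pow_le_pow_left₀ (abs_nonneg y) hy _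
        have h2 : r ^ (k-1) = r ^ k / r := by
          rw [eq_div_iff hr0.ne', ← pow_succ, Nat.sub_add_cancel hk]
        linarith
      calc |(ascPochhammer ℝ k).eval (-c)| / (Nat.factorial k) * ((k:ℝ) * |y| ^ (k-1))
          ≤ |(ascPochhammer ℝ k).eval (-c)| / (Nat.factorial k) * ((k:ℝ) * (r ^ k / r)) := by
            apply mul_le_mul_of_nonneg_left _ (by positivity)
            exact mul_le_mul_of_nonneg_left hpow (by positivity)
        _ = (k:ℝ) * (|(ascPochhammer ℝ k).eval (-c)| / (Nat.factorial k) * r ^ k) / r := by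
            ring
  -- sum function and derivative
  set S : ℝ → ℝ := fun z => ∑' k, a k * z ^ k with hS
  set T : ℝ → ℝ := fun y => ∑' k, a k * ((k:ℝ) * y ^ (k-1)) with hT
  have hmem : ∀ y : ℝ, y ∈ Ioo (-r) r → |y| ≤ r := fun y hy =>
    (abs_lt.2 ⟨hy.1, hy.2⟩).le
  have hderivS : ∀ y ∈ Ioo (-r) r, HasDerivAt S (T y) y := by
    intro y hy
    exact hasDerivAt_tsum_of_isPreconnected husum isOpen_Ioo (convex_Ioo _ _).isPreconnected
      (fun k z hz => (hasDerivAt_pow k z).const_mul (a k))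
      (fun k z hz => hbound k z (hmem z hz))
      (show (0:ℝ) ∈ Ioo (-r) r by constructor <;> simp [hr0, hr0.le] <;> linarith)
      (hsumval 0 (by simp [hr0.le])) hy
  have hsumT : ∀ y : ℝ, |y| ≤ r → HasSum (fun k => a k * ((k:ℝ) * y ^ (k-1))) (T y) := by
    intro y hy
    exact (Summable.of_norm_bounded husum (fun k => hbound k y hy)).hasSum
  -- the ODE
  have hODE : ∀ y : ℝ, |y| ≤ r → (1 - y) * T y = -c * S y := by
    intro y hy
    have hgs : HasSum (fun k => a k * y ^ k) (S y) := (hsumval y hy).hasSum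
    have hts : HasSum (fun k => a k * ((k:ℝ) * y ^ (k-1))) (T y) := hsumT y hy
    have hshift : HasSum (fun k => a (k+1) * (((k:ℝ)+1) * y ^ k)) (T y) := by
      have h2 : HasSum (fun n : ℕ => a (n+1) * (((n+1:ℕ):ℝ) * y ^ (n+1-1)))
          (T y - ∑ i ∈ Finset.range 1, a i * ((i:ℝ) * y ^ (i-1))) :=
        (hasSum_nat_add_iff' (f := fun k => a k * ((k:ℝ) * y ^ (k-1))) 1).2 hts
      simp only [Finset.range_one, Finset.sum_singleton, Nat.cast_zero, zero_mul, mul_zero,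
        sub_zero, Nat.add_sub_cancel] at h2
      convert h2 using 2 with k
      push_cast; ring
    have hterm : ∀ k : ℕ, a (k+1) * (((k:ℝ)+1) * y ^ k)
        = y * (a k * ((k:ℝ) * y ^ (k-1))) - c * (a k * y ^ k) := by
      intro k
      have h1 : a (k+1) * ((k:ℝ)+1) = a k * ((k:ℝ) - c) := by
        rw [ha]
        simp only
        rw [poch_succ, Nat.factorial_succ]
        push_cast
        have hfk : ((Nat.factorial k):ℝ) ≠ 0 := by positivity
        field_simp
        ring
      have h2 : y * ((k:ℝ) * y ^ (k-1)) = (k:ℝ) * y ^ k := by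
        rcases Nat.eq_zero_or_pos k with hk | hk
        · simp [hk]
        · have hyy : y * y ^ (k-1) = y ^ k := by
            rw [← pow_succ' y (k-1), Nat.sub_add_cancel hk]
          rw [mul_left_comm, hyy]
      calc a (k+1) * (((k:ℝ)+1) * y ^ k) = (a (k+1) * ((k:ℝ)+1)) * y ^ k := by ring
        _ = (a k * ((k:ℝ) - c)) * y ^ k := by rw [h1]
        _ = (k:ℝ) * (a k * y ^ k) - c * (a k * y ^ k) := by ring
        _ = y * (a k * ((k:ℝ) * y ^ (k-1))) - c * (a k * y ^ k) := by
            rw [show y * (a k * ((k:ℝ) * y ^ (k-1))) = a k * (y * ((k:ℝ) * y ^ (k-1))) by ring,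
              h2]; ring
    have hcomb : HasSum (fun k => y * (a k * ((k:ℝ) * y ^ (k-1))) - c * (a k * y ^ k))
        (y * T y - c * S y) := (hts.mul_left y).sub (hgs.mul_left c)
    have := hshift.unique (by simpa only [hterm] using hcomb)
    linarith [this]
  -- the auxiliary function F z = S z * (1 - z) ^ (-c) has zero derivative on the ball
  set F : ℝ → ℝ := fun z => S z * (1 - z) ^ (-c) with hF
  have hFderiv : ∀ y ∈ Ioo (-r) r, HasDerivAt F 0 y := by
    intro y hy
    have h1y : (0:ℝ) < 1 - y := by have := hy.2; simp only [mem_Ioo] at hy; linarith [hr1]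
    have hrpow : HasDerivAt (fun z : ℝ => (1 - z) ^ (-c)) (c * (1 - y) ^ (-c - 1)) y := by
      have hinner : HasDerivAt (fun z : ℝ => 1 - z) (-1) y := by
        simpa using (hasDerivAt_id y).const_sub 1
      have houter : HasDerivAt (fun x : ℝ => x ^ (-c)) (-c * (1 - y) ^ (-c - 1)) (1 - y) :=
        Real.hasDerivAt_rpow_const (Or.inl h1y.ne')
      have := houter.comp y hinner
      exact this.congr_deriv (by ring)
    have := (hderivS y hy).mul hrpow
    refine this.congr_deriv (Eq.symm ?_)
    have hsplit : (1 - y) ^ (-c) = (1 - y) * (1 - y) ^ (-c - 1) := by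
      have h := Real.rpow_add h1y 1 (-c - 1)
      rw [Real.rpow_one, show (1:ℝ) + (-c - 1) = -c by ring] at h
      exact h
    rw [hsplit]
    have hode := hODE y (hmem y hy)
    calc (0:ℝ) = ((1 - y) * T y + c * S y) * (1 - y) ^ (-c - 1) := by
          rw [hode]; ring
      _ = T y * ((1 - y) * (1 - y) ^ (-c - 1)) + S y * (c * (1 - y) ^ (-c - 1)) := by ring
  -- F is constant on the ball, and F 0 = 1
  have hFt : F t = F 0 := by
    rcases le_total 0 t with h0t | ht0
    · have hsub : Icc (0:ℝ) t ⊆ Ioo (-r) r := fun z hz => by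
        simp only [mem_Icc] at hz
        exact ⟨by linarith, by linarith [le_abs_self t, htr]⟩
      exact (constant_of_has_deriv_right_zero
        (fun z hz => ((hFderiv z (hsub hz)).continuousAt).continuousWithinAt)
        (fun z hz => ((hFderiv z (hsub (Ico_subset_Icc_self hz))).hasDerivWithinAt))
        t (right_mem_Icc.2 h0t))
    · have hsub : Icc t (0:ℝ) ⊆ Ioo (-r) r := fun z hz => by
        simp only [mem_Icc] at hz
        exact ⟨by linarith [neg_abs_le t, htr], by linarith⟩
      exact (constant_of_has_deriv_right_zero
        (fun z hz => ((hFderiv z (hsub hz)).continuousAt).continuousWithinAt)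
        (fun z hz => ((hFderiv z (hsub (Ico_subset_Icc_self hz))).hasDerivWithinAt))
        0 (right_mem_Icc.2 ht0)).symm
  have hS0 : S 0 = 1 := by
    rw [hS]
    simp only
    rw [tsum_eq_single 0 (by intro k hk; simp [zero_pow hk])]
    simp [ha, ascPochhammer_zero]
  have hF0 : F 0 = 1 := by
    rw [hF]; simp only; rw [hS0]; simp
  have h1t : (0:ℝ) < 1 - t := by rcases abs_lt.1 ht with ⟨h1, h2⟩; linarith
  have hSt : S t = (1 - t) ^ c := by
    have h := hFt.trans hF0
    rw [hF] at h
    simp only at h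
    have hmul : (1 - t) ^ (-c) * (1 - t) ^ c = 1 := by
      rw [← Real.rpow_add h1t]; simp
    calc S t = S t * ((1 - t) ^ (-c) * (1 - t) ^ c) := by rw [hmul, mul_one]
      _ = (S t * (1 - t) ^ (-c)) * (1 - t) ^ c := by ring
      _ = (1 - t) ^ c := by rw [h, one_mul]
  have := (hsumval t htr.le).hasSum
  rwa [show (∑' k, a k * t ^ k) = S t from rfl, hSt] at this

lemma Gamma_add_nat (s : ℝ) (hs : 0 < s) (k : ℕ) :
    Real.Gamma (s + k) = Real.Gamma s * (ascPochhammer ℝ k).eval s := by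
  induction k with
  | zero => simp [ascPochhammer_zero]
  | succ n ih =>
    have h1 : s + ((n:ℕ)+1 : ℕ) = (s + n) + 1 := by push_cast; ring
    rw [h1, Real.Gamma_add_one (by positivity), ih, poch_succ]
    ring

lemma beta_eqOn (p q : ℝ) : EqOn (fun x : ℝ => ((x:ℂ) ^ ((p:ℂ) - 1) * (1 - (x:ℂ)) ^ ((q:ℂ) - 1)).re)
    (fun v : ℝ => v ^ (p-1) * (1-v) ^ (q-1)) (Icc 0 1) := by
  intro x hx
  simp only [mem_Icc] at hx
  have h1 : ((x:ℂ)) ^ ((p:ℂ) - 1) = ((x ^ (p-1) : ℝ) : ℂ) := by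
    rw [Complex.ofReal_cpow hx.1]; push_cast; ring_nf
  have h2 : (1 - (x:ℂ)) ^ ((q:ℂ) - 1) = (((1-x) ^ (q-1) : ℝ) : ℂ) := by
    rw [show (1 - (x:ℂ)) = (((1-x : ℝ)) : ℂ) by push_cast; ring,
      Complex.ofReal_cpow (by linarith)]
    push_cast; ring_nf
  simp only [h1, h2, ← Complex.ofReal_mul, Complex.ofReal_re]

lemma beta_integrable (p q : ℝ) (hp : 0 < p) (hq : 0 < q) :
    IntervalIntegrable (fun v : ℝ => v ^ (p-1) * (1-v) ^ (q-1)) volume 0 1 := by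
  have h := Complex.betaIntegral_convergent (u := (p:ℂ)) (v := (q:ℂ)) (by simpa) (by simpa)
  rw [intervalIntegrable_iff_integrableOn_Ioc_of_le zero_le_one] at h ⊢
  exact MeasureTheory.IntegrableOn.congr_fun h.re
    (fun x hx => beta_eqOn p q (Ioc_subset_Icc_self hx)) measurableSet_Ioc

lemma real_beta (p q : ℝ) (hp : 0 < p) (hq : 0 < q) :
    ∫ v in (0:ℝ)..1, v ^ (p-1) * (1-v) ^ (q-1)
      = Real.Gamma p * Real.Gamma q / Real.Gamma (p+q) := by
  have hc := Complex.Gamma_mul_Gamma_eq_betaIntegral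
    (s := (p:ℂ)) (t := (q:ℂ)) (by simpa) (by simpa)
  have hβ : Complex.betaIntegral (p:ℂ) (q:ℂ)
      = ((∫ v in (0:ℝ)..1, v ^ (p-1) * (1-v) ^ (q-1) : ℝ) : ℂ) := by
    rw [Complex.betaIntegral, ← intervalIntegral.integral_ofReal]
    apply intervalIntegral.integral_congr
    intro x hx
    rw [uIcc_of_le zero_le_one] at hx
    have := beta_eqOn p q hx
    simp only at this
    have h1 : ((x:ℂ)) ^ ((p:ℂ) - 1) = ((x ^ (p-1) : ℝ) : ℂ) := by
      rw [Complex.ofReal_cpow hx.1]; push_cast; ring_nf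
    have h2 : (1 - (x:ℂ)) ^ ((q:ℂ) - 1) = (((1-x) ^ (q-1) : ℝ) : ℂ) := by
      rw [show (1 - (x:ℂ)) = (((1-x : ℝ)) : ℂ) by push_cast; ring,
        Complex.ofReal_cpow (by linarith [hx.2])]
      push_cast; ring_nf
    simp only [h1, h2, ← Complex.ofReal_mul]
  rw [hβ, ← Complex.ofReal_add, Complex.Gamma_ofReal, Complex.Gamma_ofReal,
    Complex.Gamma_ofReal, ← Complex.ofReal_mul, ← Complex.ofReal_mul] at hc
  have hc' := Complex.ofReal_injective hc
  have hΓ : Real.Gamma (p+q) ≠ 0 := (Real.Gamma_pos_of_pos (by linarith)).ne'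
  field_simp
  linarith [hc']

lemma euler_integral_series (a b c z : ℝ) (ha : -1 < a) (hb : -1 < b) (hz : |z| < 1) :
    ∫ v in (0:ℝ)..1, v ^ a * (1-v) ^ b * (1 - z*v) ^ c
      = ∑' k : ℕ, (ascPochhammer ℝ k).eval (-c) / (Nat.factorial k) * z ^ k
          * ∫ v in (0:ℝ)..1, v ^ (a + (k:ℕ)) * (1-v) ^ b := by
  set μ : Measure ℝ := volume.restrict (Ioc 0 1) with hμ
  set A : ℕ → ℝ := fun k => (ascPochhammer ℝ k).eval (-c) / (Nat.factorial k) with hA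
  set F : ℕ → ℝ → ℝ := fun k v => (A k * z ^ k) * (v ^ (a + (k:ℕ)) * (1-v) ^ b) with hF
  have hbeta_int : ∀ k : ℕ, Integrable (fun v : ℝ => v ^ (a + (k:ℕ)) * (1-v) ^ b) μ := by
    intro k
    have h := beta_integrable (a + k + 1) (b + 1) (by have hk : (0:ℝ) ≤ (k:ℕ) := Nat.cast_nonneg k; linarith) (by linarith)
    rw [intervalIntegrable_iff_integrableOn_Ioc_of_le zero_le_one] at h
    simpa [hμ, IntegrableOn] using h
  have hF_int : ∀ k : ℕ, Integrable (F k) μ := fun k => (hbeta_int k).const_mul _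
  -- uniform comparison with the k = 0 beta integrand
  have hptle : ∀ (k : ℕ) (v : ℝ), v ∈ Ioc (0:ℝ) 1 →
      v ^ (a + (k:ℕ)) * (1-v) ^ b ≤ v ^ a * (1-v) ^ b := by
    intro k v hv
    apply mul_le_mul_of_nonneg_right _ (Real.rpow_nonneg (by linarith [hv.2]) b)
    exact Real.rpow_le_rpow_of_exponent_ge hv.1 hv.2 (by linarith [Nat.cast_nonneg (α := ℝ) k])
  have hpt0 : ∀ (k : ℕ) (v : ℝ), v ∈ Ioc (0:ℝ) 1 → 0 ≤ v ^ (a + (k:ℕ)) * (1-v) ^ b := by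
    intro k v hv
    exact mul_nonneg (Real.rpow_nonneg hv.1.le _) (Real.rpow_nonneg (by linarith [hv.2]) _)
  set C : ℝ := ∫ v in Ioc (0:ℝ) 1, v ^ a * (1-v) ^ b with hC
  have hJle : ∀ k : ℕ, ∫ v, ‖F k v‖ ∂μ ≤ |A k| * |z| ^ k * C := by
    intro k
    have h1 : ∀ v ∈ Ioc (0:ℝ) 1, ‖F k v‖ ≤ |A k| * |z| ^ k * (v ^ a * (1-v) ^ b) := by
      intro v hv
      rw [hF]
      simp only [norm_mul, Real.norm_eq_abs, abs_mul, abs_pow]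
      rw [abs_of_nonneg (Real.rpow_nonneg hv.1.le _),
        abs_of_nonneg (Real.rpow_nonneg (by linarith [hv.2]) b)]
      calc |A k| * |z| ^ k * (v ^ (a + (k:ℕ)) * (1-v) ^ b)
          ≤ |A k| * |z| ^ k * (v ^ a * (1-v) ^ b) := by
            apply mul_le_mul_of_nonneg_left (hptle k v hv) (by positivity)
        _ = |A k| * |z| ^ k * (v ^ a * (1-v) ^ b) := rfl
    calc ∫ v, ‖F k v‖ ∂μ ≤ ∫ v in Ioc (0:ℝ) 1, |A k| * |z| ^ k * (v ^ a * (1-v) ^ b) := by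
          apply setIntegral_mono_on (hF_int k).norm
            (((hbeta_int 0).const_mul (|A k| * |z| ^ k)).congr (by
              apply Filter.EventuallyEq.mul (Filter.EventuallyEq.refl _ _)
              filter_upwards [ae_restrict_mem measurableSet_Ioc] with v hv
              norm_num)) measurableSet_Ioc h1
        _ = |A k| * |z| ^ k * C := by rw [hC, ← MeasureTheory.integral_const_mul]
  have hF_sum : Summable (fun k : ℕ => ∫ v, ‖F k v‖ ∂μ) := by
    apply Summable.of_nonneg_of_le (fun k => integral_nonneg (fun v => norm_nonneg _)) hJle
    have hsum := (summable_poch_abs (-c) |z| (abs_nonneg z) hz).mul_right C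
    have h2 : (fun k : ℕ => |A k| * |z| ^ k * C)
        = fun k : ℕ => |(ascPochhammer ℝ k).eval (-c)| / (Nat.factorial k) * |z| ^ k * C := by
      funext k
      rw [hA]
      simp [abs_div, abs_of_nonneg (show (0:ℝ) ≤ (Nat.factorial k : ℝ) by positivity)]
    rw [h2]
    exact hsum
  have hkey := MeasureTheory.integral_tsum_of_summable_integral_norm hF_int hF_sum
  -- identify the pointwise tsum
  have hptsum : ∀ v ∈ Ioc (0:ℝ) 1, (∑' k, F k v) = v ^ a * (1-v) ^ b * (1 - z*v) ^ c := by
    intro v hv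
    have hzv : |z * v| < 1 := by
      rw [abs_mul]
      calc |z| * |v| ≤ |z| * 1 := by
            apply mul_le_mul_of_nonneg_left _ (abs_nonneg z)
            rw [abs_of_pos hv.1]; exact hv.2
        _ = |z| := mul_one _
        _ < 1 := hz
    have hbin := (hasSum_binomial c (z*v) hzv).mul_left (v ^ a * (1-v) ^ b)
    have hterm : ∀ k : ℕ, v ^ a * (1-v) ^ b * (A k * (z*v) ^ k) = F k v := by
      intro k
      rw [hF]
      simp only
      rw [Real.rpow_add hv.1 a k, Real.rpow_natCast, mul_pow]
      ring
    rw [← hbin.tsum_eq]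
    exact tsum_congr (fun k => (hterm k).symm)
  -- put it together
  rw [intervalIntegral.integral_of_le zero_le_one]
  have h1 : ∫ v in Ioc (0:ℝ) 1, v ^ a * (1-v) ^ b * (1 - z*v) ^ c = ∫ v, (∑' k, F k v) ∂μ := by
    apply setIntegral_congr_fun measurableSet_Ioc
    intro v hv
    exact (hptsum v hv).symm
  rw [h1, ← hkey]
  apply tsum_congr
  intro k
  rw [hF]
  simp only
  rw [MeasureTheory.integral_const_mul, intervalIntegral.integral_of_le zero_le_one]

lemma subst_lemma (a b c w x y : ℝ) (hwx : w < x) (hxy : x < y) :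
    ∫ u in x..y, (y - u) ^ b * (u - w) ^ c * (u - x) ^ a
      = (y-x) ^ (1+a+b) * (x-w) ^ c *
        ∫ v in (0:ℝ)..1, v ^ a * (1-v) ^ b * (1 - ((y-x)/(w-x))*v) ^ c := by
  have hyx : (0:ℝ) < y - x := by linarith
  have hxw : (0:ℝ) < x - w := by linarith
  have hwx' : w - x ≠ 0 := by linarith
  set z : ℝ := (y-x)/(w-x) with hz
  have hzneg : z ≤ 0 := by
    rw [hz]
    apply div_nonpos_of_nonneg_of_nonpos hyx.le (by linarith)
  set f : ℝ → ℝ := fun u => (y - u) ^ b * (u - w) ^ c * (u - x) ^ a with hf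
  have hcomp := intervalIntegral.integral_comp_mul_add (a := 0) (b := 1) (f := f)
    (c := y - x) hyx.ne' x
  simp only [mul_zero, zero_add, mul_one] at hcomp
  have hyx2 : y - x + x = y := by ring
  rw [hyx2] at hcomp
  -- hcomp : ∫ v in 0..1, f ((y-x)*v + x) = (y-x)⁻¹ • ∫ u in x..y, f u
  have hmain : ∫ u in x..y, f u = (y-x) * ∫ v in (0:ℝ)..1, f ((y-x)*v + x) := by
    rw [hcomp, smul_eq_mul, ← mul_assoc, mul_inv_cancel₀ hyx.ne', one_mul]
  have hinteq : ∀ v ∈ uIcc (0:ℝ) 1, f ((y-x)*v + x)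
      = ((y-x) ^ (a+b) * (x-w) ^ c) * (v ^ a * (1-v) ^ b * (1 - z*v) ^ c) := by
    intro v hv
    rw [uIcc_of_le zero_le_one, mem_Icc] at hv
    have h1 : y - ((y-x)*v + x) = (y-x) * (1-v) := by ring
    have h2 : ((y-x)*v + x) - w = (x-w) * (1 - z*v) := by
      rw [hz]; field_simp; ring
    have h3 : ((y-x)*v + x) - x = (y-x) * v := by ring
    rw [hf]
    simp only
    rw [h1, h2, h3,
      Real.mul_rpow hyx.le (by linarith [hv.2]),
      Real.mul_rpow hxw.le (by nlinarith [mul_nonneg (neg_nonneg.2 hzneg) hv.1]),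
      Real.mul_rpow hyx.le hv.1,
      Real.rpow_add hyx]
    ring
  rw [hmain, intervalIntegral.integral_congr hinteq, intervalIntegral.integral_const_mul]
  rw [show (1+a+b : ℝ) = (a+b)+1 by ring, Real.rpow_add hyx (a+b) 1,
    Real.rpow_add hyx a b, Real.rpow_one]
  ring

/-- The Gauss hypergeometric function: defined by the power series for `|z| < 1`,
and extended by the Euler integral representation otherwise (meaningful when `c > b > 0`). -/
noncomputable def hypF (a b c z : ℝ) : ℝ :=
  if |z| < 1 then
    ∑' k : ℕ, ((ascPochhammer ℝ k).eval a * (ascPochhammer ℝ k).eval b /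
      (ascPochhammer ℝ k).eval c) * z ^ k / (Nat.factorial k)
  else
    (Real.Gamma c / (Real.Gamma b * Real.Gamma (c - b))) *
      ∫ v in (0:ℝ)..1, v ^ (b - 1) * (1 - v) ^ (c - b - 1) * (1 - z * v) ^ (-a)

lemma poch_pos (s : ℝ) (hs : 0 < s) (k : ℕ) : 0 < (ascPochhammer ℝ k).eval s := by
  induction k with
  | zero => simp [ascPochhammer_zero]
  | succ n ih =>
    rw [poch_succ]
    have hn : (0:ℝ) ≤ n := Nat.cast_nonneg n
    exact mul_pos ih (by linarith)

theorem integral_eq_hypF_of_lt (a b c w x y : ℝ) (ha : -1 < a) (hb : -1 < b)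
    (hwx : w < x) (hxy : x < y) :
    ∫ u in x..y, (y - u) ^ b * (u - w) ^ c * (u - x) ^ a =
      Real.Gamma (a + 1) * Real.Gamma (b + 1) / Real.Gamma (a + b + 2) *
        (y - x) ^ (1 + a + b) * (x - w) ^ c *
        hypF (-c) (a + 1) (a + b + 2) ((y - x) / (w - x)) := by
  have hGa : 0 < Real.Gamma (a+1) := Real.Gamma_pos_of_pos (by linarith)
  have hGb : 0 < Real.Gamma (b+1) := Real.Gamma_pos_of_pos (by linarith)
  have hGab : 0 < Real.Gamma (a+b+2) := Real.Gamma_pos_of_pos (by linarith)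
  set z : ℝ := (y-x)/(w-x) with hzdef
  rw [subst_lemma a b c w x y hwx hxy]
  by_cases hz : |z| < 1
  · rw [hypF, if_pos hz]
    rw [euler_integral_series a b c z ha hb hz]
    have hJ : ∀ k : ℕ, (∫ v in (0:ℝ)..1, v ^ (a + (k:ℕ)) * (1-v) ^ b)
        = Real.Gamma (a+1) * Real.Gamma (b+1) / Real.Gamma (a+b+2)
          * ((ascPochhammer ℝ k).eval (a+1) / (ascPochhammer ℝ k).eval (a+b+2)) := by
      intro k
      have hk : (0:ℝ) ≤ (k:ℕ) := Nat.cast_nonneg k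
      have h1 := real_beta (a+1+k) (b+1) (by linarith) (by linarith)
      have e1 : a+1+(k:ℕ)-1 = a + (k:ℕ) := by ring
      have e2 : b+1-1 = b := by ring
      rw [e1, e2] at h1
      rw [h1, show (a+1+(k:ℕ) : ℝ) = (a+1)+(k:ℕ) from by ring,
        Gamma_add_nat (a+1) (by linarith) k,
        show ((a+1)+(k:ℕ)+(b+1) : ℝ) = (a+b+2) + (k:ℕ) from by ring,
        Gamma_add_nat (a+b+2) (by linarith) k]
      have hp2 : (0:ℝ) < (ascPochhammer ℝ k).eval (a+b+2) := poch_pos _ (by linarith) k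
      field_simp
    have hterm : ∀ k : ℕ,
        (ascPochhammer ℝ k).eval (-c) / (Nat.factorial k) * z ^ k
          * ∫ v in (0:ℝ)..1, v ^ (a + (k:ℕ)) * (1-v) ^ b
        = (Real.Gamma (a+1) * Real.Gamma (b+1) / Real.Gamma (a+b+2))
          * (((ascPochhammer ℝ k).eval (-c) * (ascPochhammer ℝ k).eval (a+1) /
              (ascPochhammer ℝ k).eval (a+b+2)) * z ^ k / (Nat.factorial k)) := by
      intro k
      rw [hJ k]
      ring
    rw [tsum_congr hterm, tsum_mul_left]
    ring
  · rw [hypF, if_neg hz]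
    have e1 : a+1-1 = a := by ring
    have e2 : a+b+2-(a+1)-1 = b := by ring
    have e3 : a+b+2-(a+1) = b+1 := by ring
    have e4 : -(-c) = c := by ring
    rw [e1, e2, e3, e4]
    have hΓ : Real.Gamma (a+b+2) / (Real.Gamma (a+1) * Real.Gamma (b+1))
        * (Real.Gamma (a+1) * Real.Gamma (b+1) / Real.Gamma (a+b+2)) = 1 := by
      field_simp
    calc (y-x) ^ (1+a+b) * (x-w) ^ c *
          ∫ v in (0:ℝ)..1, v ^ a * (1-v) ^ b * (1 - z*v) ^ c
        = (Real.Gamma (a+1) * Real.Gamma (b+1) / Real.Gamma (a+b+2)) * (y-x) ^ (1+a+b)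
          * (x-w) ^ c * ((Real.Gamma (a+b+2) / (Real.Gamma (a+1) * Real.Gamma (b+1)))
            * ∫ v in (0:ℝ)..1, v ^ a * (1-v) ^ b * (1 - z*v) ^ c) := by
          field_simp
          simp only [mul_comm z]
      _ = _ := by rfl
end

section
/- Let H ∈ (0,1), t > 0, and define f(s) = 1_{[0,t)}(s). Then the right-sided Riemann–Liouville fractional integral of order H − 1/2 satisfies (I_−^{H−1/2} f)(s) = [1/Γ(H+1/2)] · ( (t−s)^{H−1/2} 1_{(−∞,t)}(s) − (−s)^{H−1/2} 1_{(−∞,0)}(s) ) for almost every s ∈ ℝ (for H > 1/2 this is the genuine fractional integral, for H = 1/2 the identity, and for H < 1/2 the Marchaud fractional derivative of order 1/2 − H). -/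
open MeasureTheory Real Set Filter

lemma int_Ioo_rpow (a b r : ℝ) (hab : a ≤ b) (hr : -1 < r ∨ r ≠ -1 ∧ (0:ℝ) ∉ Set.uIcc a b) :
    ∫ u in Set.Ioo a b, u ^ r = (b ^ (r+1) - a ^ (r+1)) / (r+1) := by
  rw [← integral_Ioc_eq_integral_Ioo, ← intervalIntegral.integral_of_le hab, integral_rpow hr]

lemma int_Ioo_sub_rpow (s a b r : ℝ) (hab : a ≤ b)
    (hr : -1 < r ∨ r ≠ -1 ∧ (0:ℝ) ∉ Set.uIcc (a-s) (b-s)) :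
    ∫ u in Set.Ioo a b, (u - s) ^ r = ((b - s) ^ (r+1) - (a - s) ^ (r+1)) / (r+1) := by
  rw [← integral_Ioc_eq_integral_Ioo, ← intervalIntegral.integral_of_le hab,
    intervalIntegral.integral_comp_sub_right (fun x => x ^ r) s, integral_rpow hr]

lemma int_Ici_rpow (c r : ℝ) (hr : r < -1) (hc : 0 < c) :
    ∫ u in Set.Ici c, u ^ r = -c ^ (r+1) / (r+1) := by
  rw [integral_Ici_eq_integral_Ioi, integral_Ioi_rpow_of_lt hr hc]

/-- The right-sided Riemann-Liouville fractional integral of order `α > 0`. -/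
noncomputable def rlInt (α : ℝ) (f : ℝ → ℝ) (s : ℝ) : ℝ :=
  (1 / Real.Gamma α) * ∫ u in Set.Ioi s, f u * (u - s) ^ (α - 1)

/-- The right-sided Marchaud fractional derivative of order `α ∈ (0,1)`. -/
noncomputable def marchaud (α : ℝ) (f : ℝ → ℝ) (s : ℝ) : ℝ :=
  limUnder (nhdsWithin (0:ℝ) (Set.Ioi 0)) fun ε =>
    (α / Real.Gamma (1 - α)) * ∫ u in Set.Ioi ε, (f s - f (u + s)) * u ^ (-α - 1)

/-- `I_-^α`: the fractional integral for `α > 0`, the identity for `α = 0`,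
and the Marchaud fractional derivative of order `-α` for `α < 0`. -/
noncomputable def fracI (α : ℝ) (f : ℝ → ℝ) (s : ℝ) : ℝ :=
  if 0 < α then rlInt α f s else if α = 0 then f s else marchaud (-α) f s

/-- The right-sided Riemann-Liouville fractional derivative of order `α ∈ (0,1)`. -/
noncomputable def rlDeriv (α : ℝ) (f : ℝ → ℝ) (s : ℝ) : ℝ :=
  - deriv (fun x => rlInt (1 - α) f x) s

theorem fracI_indicator_Ico (H t : ℝ) (hH : H ∈ Set.Ioo (0:ℝ) 1) (ht : 0 < t) :
    ∀ᵐ s : ℝ, fracI (H - 1/2) (Set.indicator (Set.Ico 0 t) (fun _ => (1:ℝ))) s =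
      (1 / Real.Gamma (H + 1/2)) *
        (Set.indicator (Set.Iio t) (fun s => (t - s) ^ (H - 1/2)) s -
         Set.indicator (Set.Iio 0) (fun s => (-s) ^ (H - 1/2)) s) := by
  apply Filter.Eventually.of_forall
  intro s
  have hH0 := hH.1
  have hH1 := hH.2
  set f : ℝ → ℝ := Set.indicator (Set.Ico 0 t) (fun _ => (1:ℝ)) with hf
  have harith : ∀ X : ℝ, H < 1/2 →
      (1/2 - H) / Real.Gamma (H + 1/2) * (-X / (H - 1/2)) = 1 / Real.Gamma (H + 1/2) * X := by
    intro X h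
    have hd : H - 1/2 ≠ 0 := by intro hc; rw [sub_eq_zero] at hc; rw [hc] at h; linarith
    rw [show (1/2 - H : ℝ) = -(H - 1/2) by ring, div_mul_div_comm,
      show -(H - 1/2) * (-X) = (H - 1/2) * X by ring,
      mul_comm (Real.Gamma (H + 1/2)), mul_div_mul_left X _ hd, one_div_mul_eq_div]
  rcases lt_trichotomy H (1/2) with hlt | heq | hgt
  · -- Marchaud case
    have hα : (0:ℝ) < 1/2 - H := by linarith
    have hne : H - 1/2 ≠ 0 := by intro h; rw [sub_eq_zero] at h; rw [h] at hlt; linarith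
    have hGpos : 0 < Real.Gamma (H + 1/2) := Real.Gamma_pos_of_pos (by linarith)
    have hGne : Real.Gamma (H + 1/2) ≠ 0 := hGpos.ne'
    rw [fracI, if_neg (by linarith), if_neg hne, show -(H - 1/2) = 1/2 - H by ring, marchaud]
    simp only [show (1:ℝ) - (1/2 - H) = H + 1/2 by ring]
    rcases le_or_gt t s with hts | hst
    · -- t ≤ s : everything is 0
      rw [Set.indicator_of_notMem (show s ∉ Set.Iio t by simp; linarith),
        Set.indicator_of_notMem (show s ∉ Set.Iio 0 by simp; linarith)]
      apply Filter.Tendsto.limUnder_eq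
      apply Tendsto.congr' _ tendsto_const_nhds
      apply Filter.eventuallyEq_of_mem (Ioo_mem_nhdsGT_of_mem
        (Set.left_mem_Ico.mpr one_pos))
      intro ε hε
      dsimp only
      have hz : ∀ u ∈ Set.Ioi ε, (f s - f (u + s)) * u ^ (-(1/2 - H) - 1) = 0 := by
        intro u hu
        have h1 : f s = 0 := Set.indicator_of_notMem (by simp [Set.mem_Ico]; intro; linarith) _
        have h2 : f (u + s) = 0 := Set.indicator_of_notMem
          (by simp only [Set.mem_Ico, not_and, not_lt]; intro; simp only [Set.mem_Ioi] at hu;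
              linarith [hε.1]) _
        rw [h1, h2, sub_zero, zero_mul]
      rw [setIntegral_congr_fun measurableSet_Ioi hz, integral_zero, mul_zero]
      norm_num
    · rw [Set.indicator_of_mem (show s ∈ Set.Iio t from hst)]
      rcases le_or_gt 0 s with h0s | hs0
      · -- 0 ≤ s < t
        rw [Set.indicator_of_notMem (show s ∉ Set.Iio 0 by simp; linarith)]
        apply Filter.Tendsto.limUnder_eq
        apply Tendsto.congr' _ tendsto_const_nhds
        apply Filter.eventuallyEq_of_mem (Ioo_mem_nhdsGT_of_mem
          (Set.left_mem_Ico.mpr (by linarith : (0:ℝ) < t - s)))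
        intro ε hε
        dsimp only
        simp only [Set.mem_Ioo] at hε
        have hfs : f s = 1 := Set.indicator_of_mem (Set.mem_Ico.mpr ⟨h0s, hst⟩) _
        have hz : ∀ u ∈ Set.Ioi ε, (f s - f (u + s)) * u ^ (-(1/2 - H) - 1)
            = (Set.Ici (t - s)).indicator (fun u => u ^ (-(1/2 - H) - 1)) u := by
          intro u hu
          simp only [Set.mem_Ioi] at hu
          by_cases h : t - s ≤ u
          · have h2 : f (u + s) = 0 := Set.indicator_of_notMem
              (by simp only [Set.mem_Ico, not_and, not_lt]; intro; linarith) _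
            rw [hfs, h2, sub_zero, one_mul, Set.indicator_of_mem (Set.mem_Ici.mpr h)]
          · push_neg at h
            have h2 : f (u + s) = 1 := Set.indicator_of_mem
              (Set.mem_Ico.mpr ⟨by linarith [hε.1], by linarith⟩) _
            rw [hfs, h2, sub_self, zero_mul,
              Set.indicator_of_notMem (by simp only [Set.mem_Ici, not_le]; exact h)]
        have hI : Set.Ioi ε ∩ Set.Ici (t - s) = Set.Ici (t - s) :=
          Set.inter_eq_right.mpr (fun u hu => Set.mem_Ioi.mpr (lt_of_lt_of_le hε.2 hu))
        rw [setIntegral_congr_fun measurableSet_Ioi hz,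
          setIntegral_indicator measurableSet_Ici, hI,
          int_Ici_rpow (t - s) (-(1/2 - H) - 1) (by linarith) (by linarith),
          show -(1/2 - H) - 1 + 1 = H - 1/2 by ring, sub_zero, harith _ hlt]
      · -- s < 0
        rw [Set.indicator_of_mem (show s ∈ Set.Iio 0 from hs0)]
        apply Filter.Tendsto.limUnder_eq
        apply Tendsto.congr' _ tendsto_const_nhds
        apply Filter.eventuallyEq_of_mem (Ioo_mem_nhdsGT_of_mem
          (Set.left_mem_Ico.mpr (by linarith : (0:ℝ) < -s)))
        intro ε hε
        dsimp only
        simp only [Set.mem_Ioo] at hε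
        have hfs : f s = 0 := Set.indicator_of_notMem
          (by simp [Set.mem_Ico]; intro; linarith) _
        have hz : ∀ u ∈ Set.Ioi ε, (f s - f (u + s)) * u ^ (-(1/2 - H) - 1)
            = -((Set.Ico (-s) (t - s)).indicator (fun u => u ^ (-(1/2 - H) - 1)) u) := by
          intro u _
          by_cases h : u ∈ Set.Ico (-s) (t - s)
          · obtain ⟨ha, hb⟩ := Set.mem_Ico.mp h
            have h2 : f (u + s) = 1 := Set.indicator_of_mem
              (Set.mem_Ico.mpr ⟨by linarith, by linarith⟩) _
            rw [hfs, h2, zero_sub, Set.indicator_of_mem h, neg_mul, one_mul]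
          · have h2 : f (u + s) = 0 := Set.indicator_of_notMem (by
              intro hmem
              obtain ⟨ha, hb⟩ := Set.mem_Ico.mp hmem
              exact h (Set.mem_Ico.mpr ⟨by linarith, by linarith⟩)) _
            rw [hfs, h2, sub_zero, zero_mul, Set.indicator_of_notMem h, neg_zero]
        have hI : Set.Ioi ε ∩ Set.Ico (-s) (t - s) = Set.Ico (-s) (t - s) :=
          Set.inter_eq_right.mpr
            (fun u hu => Set.mem_Ioi.mpr (lt_of_lt_of_le hε.2 (Set.mem_Ico.mp hu).1))
        rw [setIntegral_congr_fun measurableSet_Ioi hz, integral_neg,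
          setIntegral_indicator measurableSet_Ico, hI,
          integral_Ico_eq_integral_Ioo,
          int_Ioo_rpow (-s) (t - s) (-(1/2 - H) - 1) (by linarith)
            (Or.inr ⟨by intro h; rw [sub_eq_iff_eq_add] at h; linarith [h],
              Set.notMem_uIcc_of_lt (by linarith) (by linarith)⟩),
          show -(1/2 - H) - 1 + 1 = H - 1/2 by ring, ← neg_div, harith _ hlt]
  · -- identity case
    have h0 : H - 1/2 = 0 := by rw [heq]; ring
    rw [fracI, if_neg (by rw [h0]; exact lt_irrefl 0), if_pos h0]
    have hG : Real.Gamma (H + 1/2) = 1 := by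
      rw [show H + 1/2 = 1 by rw [heq]; ring, Real.Gamma_one]
    rw [hG, h0, hf]
    simp only [Set.indicator_apply, Set.mem_Ico, Set.mem_Iio, Real.rpow_zero]
    split_ifs <;> simp_all <;> linarith
  · -- RL integral case
    have hα : (0:ℝ) < H - 1/2 := by linarith
    rw [fracI, if_pos hα, rlInt]
    have hGne : Real.Gamma (H - 1/2) ≠ 0 := (Real.Gamma_pos_of_pos hα).ne'
    have hG1 : Real.Gamma (H + 1/2) = (H - 1/2) * Real.Gamma (H - 1/2) := by
      rw [show H + 1/2 = (H - 1/2) + 1 by ring, Real.Gamma_add_one hα.ne']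
    have hind : ∀ u : ℝ, f u * (u - s) ^ (H - 1/2 - 1)
        = (Set.Ico 0 t).indicator (fun u => (u - s) ^ (H - 1/2 - 1)) u := by
      intro u; by_cases h : u ∈ Set.Ico 0 t <;> simp [hf, Set.indicator_apply, h]
    simp_rw [hind]
    rw [setIntegral_indicator measurableSet_Ico]
    rcases le_or_gt t s with hts | hst
    · have hset : Set.Ioi s ∩ Set.Ico 0 t = ∅ := by
        ext u
        simp only [Set.mem_inter_iff, Set.mem_Ioi, Set.mem_Ico, Set.mem_empty_iff_false,
          iff_false, not_and]
        intro h1 h2; linarith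
      rw [hset, Set.indicator_of_notMem (show s ∉ Set.Iio t by simp; linarith),
        Set.indicator_of_notMem (show s ∉ Set.Iio 0 by simp; linarith)]
      simp
    · rw [Set.indicator_of_mem (show s ∈ Set.Iio t from hst)]
      rcases le_or_gt 0 s with h0s | hs0
      · have hset : Set.Ioi s ∩ Set.Ico 0 t = Set.Ioo s t := by
          ext u
          simp only [Set.mem_inter_iff, Set.mem_Ioi, Set.mem_Ico, Set.mem_Ioo]
          constructor
          · rintro ⟨h1, _, h3⟩; exact ⟨h1, h3⟩
          · rintro ⟨h1, h2⟩; exact ⟨h1, le_trans h0s h1.le, h2⟩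
        rw [hset, int_Ioo_sub_rpow s s t (H - 1/2 - 1) hst.le (Or.inl (by linarith)),
          Set.indicator_of_notMem (show s ∉ Set.Iio 0 by simp; linarith),
          show H - 1/2 - 1 + 1 = H - 1/2 by ring, sub_self,
          Real.zero_rpow hα.ne', hG1]
        field_simp
      · have hset : Set.Ioi s ∩ Set.Ico 0 t = Set.Ico 0 t :=
          Set.inter_eq_right.mpr (fun u hu => lt_of_lt_of_le hs0 hu.1)
        rw [hset, integral_Ico_eq_integral_Ioo,
          int_Ioo_sub_rpow s 0 t (H - 1/2 - 1) ht.le (Or.inl (by linarith)),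
          Set.indicator_of_mem (show s ∈ Set.Iio 0 from hs0),
          show H - 1/2 - 1 + 1 = H - 1/2 by ring, zero_sub, hG1]
        field_simp
end

section
/- Let H, K ∈ (0,1) with H ≠ K, and t > 0. Define Δf_t^s(v) = ((t−v)^{H−K} − (−v)^{H−K}) 1_{(−∞,−s)}(v). Then for all s > t, (I_−^{K−1/2} Δf_t^s)(v) = [(−s−v)^{H−1/2}/Γ(K+1/2)] · ( G₀((−s−v)/(t−v)) − G₀((−s−v)/(−v)) ) · 1_{(−∞,−s)}(v), where G₀(z) = z^{K−H} F(K−H, K−1/2, K+1/2, z) and F is the Gauss hypergeometric function. (It suffices to prove the case K > 1/2, where I_−^{K−1/2} is a genuine Riemann–Liouville fractional integral.) -/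
open MeasureTheory Real Set Filter

namespace RlAux
open Nat

noncomputable def poch (a : ℝ) (k : ℕ) : ℝ := (ascPochhammer ℝ k).eval a

lemma poch_zero (a : ℝ) : poch a 0 = 1 := by simp [poch]

lemma poch_succ (a : ℝ) (k : ℕ) : poch a (k + 1) = poch a k * (a + k) := by
  simp [poch, ascPochhammer_succ_right]

lemma poch_pos {b : ℝ} (hb : 0 < b) (k : ℕ) : 0 < poch b k := ascPochhammer_pos k b hb

lemma b_mul_poch_succ (b : ℝ) (k : ℕ) : b * poch (b + 1) k = poch b k * (b + k) := by
  have h1 : poch b (k + 1) = b * poch (b + 1) k := by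
    simp [poch, ascPochhammer_succ_left, Polynomial.eval_comp]
  rw [← h1, poch_succ]

lemma abs_poch_le {a : ℝ} (ha : |a| ≤ 1) (k : ℕ) : |poch a k| ≤ (k ! : ℝ) := by
  induction k with
  | zero => simp [poch_zero]
  | succ k ih =>
    rw [poch_succ, abs_mul, Nat.factorial_succ]
    have h1 : |a + (k : ℝ)| ≤ 1 + k := by
      calc |a + (k : ℝ)| ≤ |a| + |(k : ℝ)| := abs_add_le _ _
      _ ≤ 1 + k := by rw [Nat.abs_cast]; linarith
    calc |poch a k| * |a + (k : ℝ)| ≤ (k ! : ℝ) * (1 + k) := by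
          apply mul_le_mul ih h1 (abs_nonneg _) (Nat.cast_nonneg _)
      _ = ((k + 1) * k ! : ℕ) := by push_cast; ring
  
end RlAux

namespace RlAux
open Nat

lemma coef_abs_le {a : ℝ} (ha : |a| ≤ 1) (k : ℕ) : |poch a k / k !| ≤ 1 := by
  rw [abs_div, abs_of_nonneg (by positivity : (0:ℝ) ≤ (k ! : ℝ)),
    div_le_one (by positivity)]
  exact abs_poch_le ha k

lemma summable_deriv_aux {s : ℝ} (h0 : 0 ≤ s) (h1 : s < 1) :
    Summable (fun k : ℕ => (k : ℝ) * s ^ (k - 1)) := by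
  rcases eq_or_lt_of_le h0 with h | h
  · apply summable_of_ne_finset_zero (s := {0, 1})
    intro k hk
    simp only [Finset.mem_insert, Finset.mem_singleton, not_or] at hk
    have : k - 1 ≠ 0 := by omega
    rw [← h, zero_pow this, mul_zero]
  · have hs : ‖s‖ < 1 := by rw [Real.norm_eq_abs, abs_of_pos h]; exact h1
    have h2 := (summable_pow_mul_geometric_of_norm_lt_one 1 hs).mul_left s⁻¹
    apply h2.congr
    intro k
    cases k with
    | zero => simp
    | succ k =>
      have : s ≠ 0 := ne_of_gt h
      field_simp [pow_succ]
      ring_nf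
      rw [Nat.add_sub_cancel_left]

theorem hasSum_one_sub_rpow {a x : ℝ} (ha : |a| ≤ 1) (hx0 : 0 ≤ x) (hx1 : x < 1) :
    HasSum (fun k : ℕ => poch a k * x ^ k / k !) ((1 - x) ^ (-a)) := by
  set c : ℕ → ℝ := fun k => poch a k / k ! with hc
  have hcabs : ∀ k, |c k| ≤ 1 := coef_abs_le ha
  have hsum : ∀ y : ℝ, |y| < 1 → Summable (fun k => c k * y ^ k) := by
    intro y hy
    apply Summable.of_norm
    apply Summable.of_nonneg_of_le (fun k => norm_nonneg _) (fun k => ?_)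
      (summable_geometric_of_lt_one (abs_nonneg y) hy)
    rw [norm_mul, Real.norm_eq_abs, Real.norm_eq_abs, abs_pow]
    calc |c k| * |y| ^ k ≤ 1 * |y| ^ k :=
          mul_le_mul_of_nonneg_right (hcabs k) (by positivity)
    _ = |y| ^ k := one_mul _
  have hsum0 : Summable (fun k : ℕ => c k * (0:ℝ) ^ k) := hsum 0 (by norm_num)
  have hderiv : ∀ r : ℝ, 0 < r → r < 1 → ∀ y ∈ Ioo (-r) r,
      HasDerivAt (fun z => ∑' k : ℕ, c k * z ^ k) (∑' k : ℕ, c k * ((k:ℝ) * y ^ (k-1))) y := by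
    intro r hr0 hr1 y hy
    have hu : Summable (fun n : ℕ => (n : ℝ) * r ^ (n - 1)) := summable_deriv_aux hr0.le hr1
    refine hasDerivAt_tsum_of_isPreconnected hu isOpen_Ioo (convex_Ioo _ _).isPreconnected
      (fun n z _ => (hasDerivAt_pow n z).const_mul (c n)) (fun n z hz => ?_)
      (show (0:ℝ) ∈ Ioo (-r) r from ⟨by linarith, hr0⟩) hsum0 hy
    rw [norm_mul, norm_mul, Real.norm_eq_abs, Real.norm_eq_abs, Real.norm_eq_abs, abs_pow,
      Nat.abs_cast]
    have hz' : |z| ≤ r := by rw [abs_le]; exact ⟨hz.1.le, hz.2.le⟩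
    have h1 : |z| ^ (n-1) ≤ r ^ (n-1) := pow_le_pow_left₀ (abs_nonneg z) hz' _
    have h2 := hcabs n
    have h3 : (0:ℝ) ≤ (n:ℝ) := Nat.cast_nonneg n
    calc |c n| * ((n:ℝ) * |z| ^ (n-1)) ≤ 1 * ((n:ℝ) * |z| ^ (n-1)) :=
          mul_le_mul_of_nonneg_right h2 (by positivity)
    _ = (n:ℝ) * |z| ^ (n-1) := one_mul _
    _ ≤ (n:ℝ) * r ^ (n-1) := mul_le_mul_of_nonneg_left h1 h3
  have cder : ∀ n : ℕ, c (n+1) * ((n:ℝ)+1) = c n * (a + n) := by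
    intro n
    have hfne : ((n)! : ℝ) ≠ 0 := by positivity
    simp only [hc, poch_succ, Nat.factorial_succ]
    push_cast
    field_simp
  have hrel : ∀ y : ℝ, |y| < 1 →
      (∑' k : ℕ, c k * ((k:ℝ) * y ^ (k-1))) * (1 - y) = a * ∑' k : ℕ, c k * y ^ k := by
    intro y hy
    have hF : Summable (fun k : ℕ => c k * ((k:ℝ) * y ^ (k-1))) := by
      apply Summable.of_norm
      apply Summable.of_nonneg_of_le (fun k => norm_nonneg _) (fun k => ?_)
        (summable_deriv_aux (abs_nonneg y) hy)
      rw [norm_mul, norm_mul, Real.norm_eq_abs, Real.norm_eq_abs, Real.norm_eq_abs, abs_pow,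
        Nat.abs_cast]
      have h2 := hcabs k
      have h3 : (0:ℝ) ≤ (k:ℝ) := Nat.cast_nonneg k
      calc |c k| * ((k:ℝ) * |y| ^ (k-1)) ≤ 1 * ((k:ℝ) * |y| ^ (k-1)) :=
            mul_le_mul_of_nonneg_right h2 (by positivity)
      _ = (k:ℝ) * |y| ^ (k-1) := one_mul _
    have hFs : HasSum (fun k : ℕ => c k * ((k:ℝ) * y ^ (k-1)))
        (∑' k : ℕ, c k * ((k:ℝ) * y ^ (k-1))) := hF.hasSum
    have hA : HasSum (fun n : ℕ => c n * (a + n) * y ^ n)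
        (∑' k : ℕ, c k * ((k:ℝ) * y ^ (k-1))) := by
      have h1 := (hasSum_nat_add_iff
        (f := fun k : ℕ => c k * ((k:ℝ) * y ^ (k-1))) 1).mpr (by simpa using hFs)
      have heq : (fun n : ℕ => (fun k : ℕ => c k * ((k:ℝ) * y ^ (k-1))) (n+1))
          = fun n : ℕ => c n * (a + n) * y ^ n := by
        funext n
        simp only [Nat.add_sub_cancel]
        push_cast
        linear_combination y ^ n * cder n
      rwa [heq] at h1
    have hAy := hA.mul_right y
    set W : ℕ → ℝ := fun k => if k = 0 then 0 else c (k-1) * (a + ((k:ℝ)-1)) * y ^ (k-1) * y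
      with hW
    have hWsum : HasSum W ((∑' k : ℕ, c k * ((k:ℝ) * y ^ (k-1))) * y) := by
      have heq2 : (fun n : ℕ => W (n+1)) = fun n : ℕ => c n * (a + n) * y ^ n * y := by
        funext n
        simp only [hW, if_neg (Nat.succ_ne_zero n), Nat.add_sub_cancel]
        push_cast
        ring
      have h2 : HasSum (fun n : ℕ => W (n+1))
          ((∑' k : ℕ, c k * ((k:ℝ) * y ^ (k-1))) * y) := by
        rw [heq2]; exact hAy
      have h3 := (hasSum_nat_add_iff (f := W) 1).mp h2
      simpa [hW] using h3
    have hsub := hA.sub hWsum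
    have heq3 : (fun n : ℕ => c n * (a + n) * y ^ n - W n)
        = fun n : ℕ => a * (c n * y ^ n) := by
      funext n
      cases n with
      | zero => simp [hW, mul_comm]
      | succ n =>
        simp only [hW, if_neg (Nat.succ_ne_zero n), Nat.add_sub_cancel]
        push_cast
        linear_combination y ^ (n+1) * cder n
    rw [heq3] at hsub
    have huniq := ((hsum y hy).hasSum.mul_left a).unique hsub
    rw [mul_one_sub]
    linarith [huniq]
  -- main argument
  set r' : ℝ := (x+1)/2 with hr'
  have hr0 : 0 < r' := by rw [hr']; linarith
  have hxr : x < r' := by rw [hr']; linarith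
  have hr1 : r' < 1 := by rw [hr']; linarith
  have hgder : ∀ y ∈ Icc 0 x,
      HasDerivAt (fun z => (1 - z) ^ a * ∑' k : ℕ, c k * z ^ k) 0 y := by
    intro y hy
    have hy0 : 0 ≤ y := hy.1
    have hy1 : y < 1 := lt_of_le_of_lt hy.2 hx1
    have h1y : 0 < 1 - y := by linarith
    have hyr : y ∈ Ioo (-r') r' := ⟨by linarith, lt_of_le_of_lt hy.2 hxr⟩
    have hSd := hderiv r' hr0 hr1 y hyr
    have hpow : HasDerivAt (fun z : ℝ => (1 - z) ^ a) (a * (1-y)^(a-1) * (-1)) y := by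
      have hin : HasDerivAt (fun z : ℝ => 1 - z) (-1) y := (hasDerivAt_id y).const_sub 1
      have hout : HasDerivAt (fun w : ℝ => w ^ a) (a * (1-y)^(a-1)) (1-y) :=
        Real.hasDerivAt_rpow_const (Or.inl h1y.ne')
      exact hout.comp y hin
    have hmul := hpow.mul hSd
    convert hmul using 1
    · rfl
    · rfl
    · rfl
    have hkey := hrel y (by rwa [abs_of_nonneg hy0])
    have hsplit : (1-y)^a = (1-y)^(a-1) * (1-y) := by
      rw [show a = a - 1 + 1 by ring, Real.rpow_add_one h1y.ne']
      ring_nf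
    rw [hsplit]
    linear_combination (-(1-y)^(a-1)) * hkey
  have hcont : ContinuousOn (fun z => (1 - z) ^ a * ∑' k : ℕ, c k * z ^ k) (Icc 0 x) :=
    fun y hy => ((hgder y hy).continuousAt).continuousWithinAt
  have hconst := constant_of_has_deriv_right_zero hcont
    (fun y hy => (hgder y (Ico_subset_Icc_self hy)).hasDerivWithinAt) x
    (right_mem_Icc.mpr hx0)
  have hS0 : (∑' k : ℕ, c k * (0:ℝ) ^ k) = 1 := by
    rw [tsum_eq_single 0 (fun k hk => by simp [zero_pow hk])]
    simp [hc, poch_zero]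
  have hval : (1-x)^a * ∑' k : ℕ, c k * x ^ k = 1 := by
    rw [hconst]
    simp [hS0]
  have hSx : (∑' k : ℕ, c k * x ^ k) = (1-x)^(-a) := by
    rw [Real.rpow_neg (by linarith : (0:ℝ) ≤ 1 - x)]
    exact eq_inv_of_mul_eq_one_left (by linarith [hval])
  have hfinal := (hsum x (by rwa [abs_of_nonneg hx0])).hasSum
  rw [hSx] at hfinal
  have heqf : (fun k : ℕ => poch a k * x ^ k / k !) = fun k => c k * x ^ k := by
    funext k
    rw [hc]
    ring
  rw [heqf]
  exact hfinal

end RlAux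

namespace RlAux
open Nat

lemma integral_Ioo_rpow {e : ℝ} (he : -1 < e) :
    ∫ w in Ioo (0:ℝ) 1, w ^ e = 1 / (e + 1) := by
  have h1 : ∫ w in Ioo (0:ℝ) 1, w ^ e = ∫ w in (0:ℝ)..1, w ^ e := by
    rw [intervalIntegral.integral_of_le zero_le_one,
      MeasureTheory.integral_Ioc_eq_integral_Ioo]
  rw [h1, integral_rpow (Or.inl he), Real.one_rpow, Real.zero_rpow (by linarith)]
  ring

lemma integrableOn_Ioo_rpow {e : ℝ} (he : -1 < e) :
    IntegrableOn (fun w : ℝ => w ^ e) (Ioo (0:ℝ) 1) := by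
  have h := intervalIntegral.intervalIntegrable_rpow' (a := 0) (b := 1) he
  rwa [intervalIntegrable_iff_integrableOn_Ioo_of_le zero_le_one] at h

lemma series_eq_integral {a b z : ℝ} (ha : |a| ≤ 1) (hb : 0 < b) (hz0 : 0 ≤ z) (hz1 : z < 1) :
    ∑' k : ℕ, (poch a k * poch b k / poch (b+1) k) * z ^ k / k !
      = b * ∫ w in Ioo (0:ℝ) 1, w ^ (b-1) * (1 - z*w) ^ (-a) := by
  set F : ℕ → ℝ → ℝ := fun k w => (poch a k * z ^ k / k !) * w ^ (b - 1 + k) with hF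
  have hexp : ∀ k : ℕ, (-1:ℝ) < b - 1 + k := fun k => by
    have : (0:ℝ) ≤ k := Nat.cast_nonneg k
    linarith
  have hbk : ∀ k : ℕ, (0:ℝ) < b + k := fun k => by
    have : (0:ℝ) ≤ k := Nat.cast_nonneg k
    linarith
  have hint : ∀ k, IntegrableOn (F k) (Ioo (0:ℝ) 1) := fun k =>
    (integrableOn_Ioo_rpow (hexp k)).const_mul _
  have hIval : ∀ k : ℕ, ∫ w in Ioo (0:ℝ) 1, F k w
      = (poch a k * z ^ k / k !) * (1/(b + k)) := by
    intro k
    rw [show (∫ w in Ioo (0:ℝ) 1, F k w)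
        = ∫ w in Ioo (0:ℝ) 1, (poch a k * z ^ k / k !) * w ^ (b - 1 + k) from rfl,
      MeasureTheory.integral_const_mul, integral_Ioo_rpow (hexp k)]
    congr 2
    ring
  have hnorm : ∀ k : ℕ, ∫ w in Ioo (0:ℝ) 1, ‖F k w‖
      = |poch a k * z ^ k / k !| * (1/(b + k)) := by
    intro k
    have heq : EqOn (fun w => ‖F k w‖)
        (fun w => |poch a k * z ^ k / k !| * w ^ (b-1+k)) (Ioo (0:ℝ) 1) := by
      intro w hw
      simp only [hF, norm_mul, Real.norm_eq_abs,
        abs_of_nonneg (Real.rpow_nonneg hw.1.le _)]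
    rw [setIntegral_congr_fun measurableSet_Ioo heq, MeasureTheory.integral_const_mul,
      integral_Ioo_rpow (hexp k)]
    congr 2
    ring
  have hcoefb : ∀ k : ℕ, |poch a k * z ^ k / k !| ≤ z ^ k := by
    intro k
    rw [abs_div, abs_mul, abs_of_nonneg (pow_nonneg hz0 k),
      abs_of_nonneg (by positivity : (0:ℝ) ≤ (k ! : ℝ)),
      div_le_iff₀ (by positivity)]
    calc |poch a k| * z ^ k ≤ (k ! : ℝ) * z ^ k :=
          mul_le_mul_of_nonneg_right (abs_poch_le ha k) (pow_nonneg hz0 k)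
    _ = z ^ k * k ! := by ring
  have hsummable : Summable (fun k : ℕ => ∫ w in Ioo (0:ℝ) 1, ‖F k w‖) := by
    apply Summable.of_nonneg_of_le (fun k => integral_nonneg (fun w => norm_nonneg _))
      (fun k => ?_) ((summable_geometric_of_lt_one hz0 hz1).mul_right (1/b))
    rw [hnorm k]
    apply mul_le_mul (hcoefb k) _ (by positivity) (pow_nonneg hz0 k)
    apply one_div_le_one_div_of_le hb
    have : (0:ℝ) ≤ k := Nat.cast_nonneg k
    linarith
  have hptwise : ∀ w ∈ Ioo (0:ℝ) 1, (∑' k, F k w) = w ^ (b-1) * (1 - z*w) ^ (-a) := by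
    intro w hw
    have hzw0 : 0 ≤ z * w := mul_nonneg hz0 hw.1.le
    have hzw1 : z * w < 1 := lt_of_le_of_lt (mul_le_of_le_one_right hz0 hw.2.le) hz1
    have h2 := (hasSum_one_sub_rpow ha hzw0 hzw1).mul_left (w ^ (b-1))
    have heqt : ∀ k : ℕ, w ^ (b-1) * (poch a k * (z*w) ^ k / k !) = F k w := by
      intro k
      have hsplit : w ^ (b - 1 + (k:ℕ)) = w ^ (b-1) * w ^ (k:ℕ) := by
        rw [← Real.rpow_natCast w k, ← Real.rpow_add hw.1]
      simp only [hF]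
      rw [hsplit, mul_pow]
      ring
    calc (∑' k, F k w) = ∑' k, w ^ (b-1) * (poch a k * (z*w)^k / k !) :=
          tsum_congr fun k => (heqt k).symm
    _ = w ^ (b-1) * (1 - z*w)^(-a) := h2.tsum_eq
  have hmain := MeasureTheory.integral_tsum_of_summable_integral_norm hint hsummable
  have hright : ∫ w in Ioo (0:ℝ) 1, (∑' k, F k w)
      = ∫ w in Ioo (0:ℝ) 1, w ^ (b-1) * (1-z*w)^(-a) :=
    setIntegral_congr_fun measurableSet_Ioo hptwise
  have hterm : ∀ k : ℕ, (poch a k * poch b k / poch (b+1) k) * z ^ k / k !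
      = b * ((poch a k * z ^ k / k !) * (1/(b+k))) := by
    intro k
    have h1 := b_mul_poch_succ b k
    have h2 : (0:ℝ) < poch (b+1) k := poch_pos (by linarith) k
    have h5 : poch b k / poch (b+1) k = b / (b+k) := by
      rw [div_eq_div_iff h2.ne' (hbk k).ne']
      linarith [h1]
    rw [mul_div_assoc (poch a k), h5]
    ring
  calc ∑' k : ℕ, (poch a k * poch b k / poch (b+1) k) * z ^ k / k !
      = ∑' k : ℕ, b * ((poch a k * z ^ k / k !) * (1/(b+k))) := tsum_congr hterm
    _ = ∑' k : ℕ, b * ∫ w in Ioo (0:ℝ) 1, F k w :=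
        tsum_congr fun k => by rw [hIval k]
    _ = b * ∑' k : ℕ, ∫ w in Ioo (0:ℝ) 1, F k w := tsum_mul_left
    _ = b * ∫ w in Ioo (0:ℝ) 1, (∑' k, F k w) := by rw [hmain]
    _ = b * ∫ w in Ioo (0:ℝ) 1, w ^ (b-1) * (1-z*w)^(-a) := by rw [hright]

end RlAux

namespace RlAux
open Nat

lemma cont_rpow_aux {β a' c' : ℝ} (ha' : 0 < a') (hac : a' < c') :
    ContinuousOn (fun x : ℝ => (c' - x) ^ β) (Set.uIcc 0 a') := by
  rw [uIcc_of_le ha'.le]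
  apply ContinuousOn.rpow_const (by fun_prop)
  intro x hx
  left
  have := hx.2
  intro h
  nlinarith [sub_eq_zero.mp h]

lemma piece_integrable {α β a' c' : ℝ} (hα : 0 < α) (ha' : 0 < a') (hac : a' < c') :
    IntervalIntegrable (fun x => (c' - x) ^ β * x ^ (α - 1)) volume 0 a' :=
  IntervalIntegrable.continuousOn_mul
    (intervalIntegral.intervalIntegrable_rpow' (by linarith)) (cont_rpow_aux ha' hac)

lemma subst_lemma {α β a' c' : ℝ} (hα : 0 < α) (ha' : 0 < a') (hac : a' < c') :
    ∫ x in (0:ℝ)..a', (c' - x) ^ β * x ^ (α - 1)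
      = a' ^ α * c' ^ β * ∫ w in Ioo (0:ℝ) 1, w ^ (α-1) * (1 - (a'/c')*w) ^ β := by
  have hc0 : 0 < c' := lt_trans ha' hac
  have hz0 : 0 ≤ a'/c' := by positivity
  have hz1 : a'/c' < 1 := (div_lt_one hc0).mpr hac
  have h1 := intervalIntegral.integral_comp_mul_left
    (f := fun x => (c' - x) ^ β * x ^ (α - 1)) (a := 0) (b := 1) (c := a') ha'.ne'
  rw [mul_zero, mul_one] at h1
  have h2 : ∫ w in (0:ℝ)..1, (c' - a'*w) ^ β * (a'*w) ^ (α-1)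
      = (a'^(α-1) * c'^β) * ∫ w in (0:ℝ)..1, w^(α-1) * (1 - (a'/c')*w)^β := by
    rw [← intervalIntegral.integral_const_mul]
    apply intervalIntegral.integral_congr
    intro w hw
    rw [uIcc_of_le zero_le_one] at hw
    show (c' - a'*w) ^ β * (a'*w) ^ (α-1)
      = (a'^(α-1) * c'^β) * (w^(α-1) * (1 - (a'/c')*w)^β)
    have hw0 : 0 ≤ w := hw.1
    have hw1 : w ≤ 1 := hw.2
    have e1 : (a'*w) ^ (α-1) = a'^(α-1) * w^(α-1) := Real.mul_rpow ha'.le hw0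
    have e2 : c' - a'*w = c' * (1 - (a'/c')*w) := by field_simp
    have e3 : (0:ℝ) ≤ 1 - (a'/c')*w := by
      have := mul_le_of_le_one_right hz0 hw1
      linarith
    rw [e1, e2, Real.mul_rpow hc0.le e3]
    ring
  have h3 : ∫ x in (0:ℝ)..a', (c'-x)^β * x^(α-1)
      = a' * ∫ w in (0:ℝ)..1, (c'-a'*w)^β * (a'*w)^(α-1) := by
    rw [h1, smul_eq_mul, ← mul_assoc, mul_inv_cancel₀ ha'.ne', one_mul]
  have h4 : ∫ w in (0:ℝ)..1, w^(α-1) * (1 - (a'/c')*w)^β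
      = ∫ w in Ioo (0:ℝ) 1, w^(α-1) * (1 - (a'/c')*w)^β := by
    rw [intervalIntegral.integral_of_le zero_le_one,
      MeasureTheory.integral_Ioc_eq_integral_Ioo]
  have h5 : a' ^ α = a' * a' ^ (α-1) := by
    rw [show α = α - 1 + 1 by ring, Real.rpow_add_one ha'.ne']
    ring
  rw [h3, h2, ← h4, h5]
  ring

end RlAux

namespace RlAux
open Nat

lemma piece_value {H K a' c' : ℝ} (hH1 : 0 < H) (hH2 : H < 1) (hK1 : K < 1)
    (hK2 : 1/2 < K) (ha' : 0 < a') (hac : a' < c') :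
    (1 / Real.Gamma (K - 1/2)) * ∫ x in (0:ℝ)..a', (c' - x) ^ (H - K) * x ^ (K - 1/2 - 1)
      = a' ^ (H - 1/2) / Real.Gamma (K + 1/2) *
        ((a'/c') ^ (K - H) * hypF (K - H) (K - 1/2) (K + 1/2) (a'/c')) := by
  have hc0 : 0 < c' := lt_trans ha' hac
  have hα : 0 < K - 1/2 := by linarith
  have hz0 : 0 ≤ a'/c' := by positivity
  have hz1 : a'/c' < 1 := (div_lt_one hc0).mpr hac
  have hGα : 0 < Real.Gamma (K - 1/2) := Real.Gamma_pos_of_pos hα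
  have hGK : Real.Gamma (K + 1/2) = (K - 1/2) * Real.Gamma (K - 1/2) := by
    rw [show K + 1/2 = (K - 1/2) + 1 by ring, Real.Gamma_add_one hα.ne']
  have hahyp : |K - H| ≤ 1 := by rw [abs_le]; constructor <;> linarith
  have hser := series_eq_integral (a := K - H) (b := K - 1/2) hahyp hα hz0 hz1
  have hhyp : hypF (K - H) (K - 1/2) (K + 1/2) (a'/c')
      = (K - 1/2) * ∫ w in Ioo (0:ℝ) 1, w ^ (K - 1/2 - 1) * (1 - (a'/c')*w) ^ (H - K) := by
    rw [hypF, if_pos (by rwa [abs_of_nonneg hz0])]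
    rw [show K + 1/2 = (K - 1/2) + 1 by ring]
    rw [show -(K - H) = H - K by ring] at hser
    exact hser
  have hsub := subst_lemma (α := K - 1/2) (β := H - K) hα ha' hac
  rw [hsub, hhyp]
  have e1 : (a'/c') ^ (K - H) = a' ^ (K - H) * c' ^ (H - K) := by
    rw [Real.div_rpow ha'.le hc0.le, show H - K = -(K - H) by ring,
      Real.rpow_neg hc0.le, div_eq_mul_inv]
  have e2 : a' ^ (H - 1/2) * a' ^ (K - H) = a' ^ (K - 1/2) := by
    rw [← Real.rpow_add ha']
    norm_num
  rw [hGK, e1]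
  set J := ∫ w in Ioo (0:ℝ) 1, w ^ (K - 1/2 - 1) * (1 - (a'/c')*w) ^ (H - K) with hJ
  have e3 : a' ^ (H - 1/2) / ((K - 1/2) * Real.Gamma (K - 1/2)) *
        (a' ^ (K - H) * c' ^ (H - K) * ((K - 1/2) * J))
      = (a' ^ (H - 1/2) * a' ^ (K - H)) * c' ^ (H - K) * J / Real.Gamma (K - 1/2) := by
    rw [div_mul_eq_mul_div, div_eq_div_iff (by positivity) hGα.ne']
    ring
  rw [e3, e2]
  ring

end RlAux


theorem rlInt_deltaF (H K t : ℝ) (hH : H ∈ Set.Ioo (0:ℝ) 1) (hK : K ∈ Set.Ioo (0:ℝ) 1)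
    (hHK : H ≠ K) (ht : 0 < t) (hK2 : 1/2 < K) :
    ∀ s > t, ∀ v : ℝ,
      rlInt (K - 1/2)
        (Set.indicator (Set.Iio (-s)) (fun u => (t - u) ^ (H - K) - (-u) ^ (H - K))) v =
      Set.indicator (Set.Iio (-s))
        (fun v => (-s - v) ^ (H - 1/2) / Real.Gamma (K + 1/2) *
          ((fun z => z ^ (K - H) * hypF (K - H) (K - 1/2) (K + 1/2) z) ((-s - v) / (t - v)) -
           (fun z => z ^ (K - H) * hypF (K - H) (K - 1/2) (K + 1/2) z) ((-s - v) / (-v)))) v := by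
  intro s hs v
  have hs0 : 0 < s := lt_trans ht hs
  have hα : 0 < K - 1/2 := by linarith
  by_cases hv : v < -s
  · rw [indicator_of_mem (mem_Iio.mpr hv)]
    rw [rlInt]
    simp only
    have ha' : 0 < -s - v := by linarith
    have hc1 : -s - v < t - v := by linarith
    have hc2 : -s - v < -v := by linarith
    have step1 : (∫ u in Ioi v,
          (Iio (-s)).indicator (fun u => (t-u)^(H-K) - (-u)^(H-K)) u * (u - v) ^ (K - 1/2 - 1))
        = ∫ x in (0:ℝ)..(-s - v), ((t - v - x)^(H-K) - (-v - x)^(H-K)) * x ^ (K - 1/2 - 1) := by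
      have e1 : ∀ u : ℝ,
          (Iio (-s)).indicator (fun u => (t-u)^(H-K) - (-u)^(H-K)) u * (u - v) ^ (K - 1/2 - 1)
          = (Iio (-s)).indicator
              (fun u => ((t-u)^(H-K) - (-u)^(H-K)) * (u - v) ^ (K - 1/2 - 1)) u := by
        intro u
        by_cases hu : u ∈ Iio (-s)
        · rw [indicator_of_mem hu, indicator_of_mem hu]
        · rw [indicator_of_notMem hu, indicator_of_notMem hu, zero_mul]
      simp_rw [e1]
      rw [MeasureTheory.integral_indicator measurableSet_Iio,
        Measure.restrict_restrict measurableSet_Iio,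
        show Iio (-s) ∩ Ioi v = Ioo v (-s) from by rw [inter_comm, Set.Ioi_inter_Iio],
        ← MeasureTheory.integral_Ioc_eq_integral_Ioo,
        ← intervalIntegral.integral_of_le (by linarith : v ≤ -s)]
      have htr := intervalIntegral.integral_comp_add_right (a := 0) (b := -s - v)
        (f := fun u => ((t-u)^(H-K) - (-u)^(H-K)) * (u - v) ^ (K - 1/2 - 1)) v
      rw [show (0:ℝ) + v = v by ring, show -s - v + v = -s by ring] at htr
      rw [← htr]
      apply intervalIntegral.integral_congr
      intro x hx
      show ((t - (x+v))^(H-K) - (-(x+v))^(H-K)) * ((x+v) - v) ^ (K-1/2-1)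
        = ((t - v - x)^(H-K) - (-v - x)^(H-K)) * x ^ (K - 1/2 - 1)
      rw [show t - (x+v) = t - v - x by ring, show -(x+v) = -v - x by ring,
        show x + v - v = x by ring]
    have hi1 := RlAux.piece_integrable (α := K-1/2) (β := H-K) hα ha' hc1
    have hi2 := RlAux.piece_integrable (α := K-1/2) (β := H-K) hα ha' hc2
    have step2 : (∫ x in (0:ℝ)..(-s - v),
          ((t - v - x)^(H-K) - (-v - x)^(H-K)) * x ^ (K - 1/2 - 1))
        = (∫ x in (0:ℝ)..(-s - v), (t - v - x)^(H-K) * x ^ (K-1/2-1))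
          - ∫ x in (0:ℝ)..(-s - v), (-v - x)^(H-K) * x ^ (K-1/2-1) := by
      rw [← intervalIntegral.integral_sub hi1 hi2]
      apply intervalIntegral.integral_congr
      intro x hx
      show ((t - v - x)^(H-K) - (-v - x)^(H-K)) * x ^ (K - 1/2 - 1)
        = (t - v - x)^(H-K) * x ^ (K-1/2-1) - (-v - x)^(H-K) * x ^ (K-1/2-1)
      ring
    rw [step1, step2, mul_sub]
    rw [RlAux.piece_value hH.1 hH.2 hK.2 hK2 ha' hc1, RlAux.piece_value hH.1 hH.2 hK.2 hK2 ha' hc2]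
    ring
  · rw [indicator_of_notMem (by simpa using hv)]
    rw [rlInt]
    rw [MeasureTheory.setIntegral_eq_zero_of_forall_eq_zero ?_, mul_zero]
    intro u hu
    rw [indicator_of_notMem, zero_mul]
    simp only [mem_Iio, not_lt]
    have h1 : -s ≤ v := not_lt.mp hv
    have h2 : v < u := mem_Ioi.mp hu
    linarith
end
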